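/- For every even positive integer m there exists k ≥ 1 such that m occurs as a difference between consecutive positive integers coprime to p_k#; in fact one may take k = m/2, so that m ∈ D(m/2), and then m ∈ D(k) for all k ≥ m/2. -/

import Mathlib

/-!
By the Chinese remainder theorem, `m ∈ D(k)` just says that one can pick a residue `r_i` modulo
each of the first `k` primes so that no `p_i` divides `r_i` or `r_i + m`, while every `j` with
`0 < j < m` has `r_i + j ≡ 0 (mod p_i)` for some `i`.

For `m = 2n` and `k = n`, take `x` odd: `2` then sieves out every odd `j`. The even gaps
`j = 2a`, `1 ≤ a ≤ n - 1`, are matched bijectively with the odd primes `p_2, …, p_n`, and the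
prime assigned to `a` gets the residue `-2a`. For that residue to leave `x` and `x + 2n`
coprime, the prime must divide neither `a` nor `n - a`. Such a matching exists by Hall's
theorem: an odd prime `Q` is excluded from at most `2 ⌊(n - 1)/Q⌋` positions, so at least
`min (n - 1) ((Q - 1)/2)` positions remain, and `p_(j+1) ≥ 2j + 1`.

Passing from `k` to `k + 1` only adds the prime `p_(k+1) ≥ 3`, which has a residue avoiding both
`0` and `-m`.
-/

namespace PrimorialDifferences

/-- The k-th primorial: product of the first k primes (p_1 = 2 is `Nat.nth Nat.Prime 0`). -/
noncomputable def primorial (k : ℕ) : ℕ := ∏ i ∈ Finset.range k, Nat.nth Nat.Prime i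

/-- `memD k m` : `m` is a difference between consecutive positive integers coprime to `primorial k`. -/
def memD (k m : ℕ) : Prop :=
  ∃ x : ℕ, 0 < x ∧ Nat.gcd x (primorial k) = 1 ∧ Nat.gcd (x + m) (primorial k) = 1 ∧
    ∀ j : ℕ, 0 < j → j < m → 1 < Nat.gcd (x + j) (primorial k)

open Finset

-- `q i` is the paper's `p_(i+1)`: primes are indexed from `0`, so `q 0 = 2`.
local notation "q" => Nat.nth Nat.Prime

instance (i : ℕ) : Fact (q i).Prime := ⟨Nat.prime_nth_prime i⟩

lemma odd_nth_prime {i : ℕ} (hi : i ≠ 0) : Odd (q i) :=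
  (Nat.prime_nth_prime i).odd_of_ne_two fun h =>
    hi (Nat.nth_injective Nat.infinite_setOfPred_prime (h.trans Nat.nth_prime_zero_eq_two.symm))

lemma two_mul_add_one_le_nth_prime {i : ℕ} (hi : 1 ≤ i) : 2 * i + 1 ≤ q i := by
  induction i, hi using Nat.le_induction with
  | base => simp [Nat.nth_prime_one_eq_three]
  | succ i hi ih =>
    have hlt : q i < q (i + 1) := Nat.nth_strictMono Nat.infinite_setOfPred_prime (by omega)
    obtain ⟨a, ha⟩ := odd_nth_prime (i := i) (by omega)
    obtain ⟨b, hb⟩ := odd_nth_prime (i := i + 1) (by omega)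
    omega

lemma primorial_pos (k : ℕ) : 0 < primorial k :=
  prod_pos fun i _ => (Nat.prime_nth_prime i).pos

lemma coprime_primorial_iff {x k : ℕ} :
    x.Coprime (primorial k) ↔ ∀ i < k, (x : ZMod (q i)) ≠ 0 := by
  simp only [primorial, Nat.coprime_prod_right_iff, mem_range, Ne, ZMod.natCast_eq_zero_iff,
    ← (Nat.prime_nth_prime _).coprime_iff_not_dvd, Nat.coprime_comm]

lemma one_lt_gcd_primorial_iff {x k : ℕ} :
    1 < x.gcd (primorial k) ↔ ∃ i < k, (x : ZMod (q i)) = 0 := by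
  have hpos : 0 < x.gcd (primorial k) :=
    Nat.gcd_pos_of_pos_right _ (primorial_pos k)
  have := (coprime_primorial_iff (x := x) (k := k)).not
  push Not at this
  rw [← this]
  omega

lemma exists_pos_natCast_eq (k : ℕ) (r : (i : ℕ) → ZMod (q i)) :
    ∃ x : ℕ, 0 < x ∧ ∀ i < k, (x : ZMod (q i)) = r i := by
  have hcop : (range k : Set ℕ).Pairwise (Function.onFun Nat.Coprime q) := fun i _ j _ hij =>
    (Nat.coprime_primes (Nat.prime_nth_prime i) (Nat.prime_nth_prime j)).mpr
      ((Nat.nth_injective Nat.infinite_setOfPred_prime).ne hij)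
  obtain ⟨x, hx⟩ := Nat.chineseRemainderOfFinset (fun i => (r i).val) q (range k)
    (fun i _ => (Nat.prime_nth_prime i).ne_zero) hcop
  refine ⟨x + primorial k, ?_, fun i hi => ?_⟩
  · exact Nat.add_pos_right _ (primorial_pos k)
  · have hdvd : q i ∣ primorial k := dvd_prod_of_mem _ (mem_range.mpr hi)
    rw [Nat.cast_add, (ZMod.natCast_eq_zero_iff _ _).mpr hdvd, add_zero,
      ← ZMod.natCast_zmod_val (r i), ZMod.natCast_eq_natCast_iff]
    exact hx i (mem_range.mpr hi)

theorem memD_iff {k m : ℕ} :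
    memD k m ↔ ∃ r : (i : ℕ) → ZMod (q i), (∀ i < k, r i ≠ 0 ∧ r i + m ≠ 0) ∧
      ∀ j, 0 < j → j < m → ∃ i < k, r i + j = 0 := by
  constructor
  · rintro ⟨x, -, hx, hxm, hgap⟩
    refine ⟨fun i => x, fun i hi => ⟨coprime_primorial_iff.mp hx i hi, ?_⟩,
      fun j hj hjm => ?_⟩
    · simpa using coprime_primorial_iff.mp hxm i hi
    · simpa using one_lt_gcd_primorial_iff.mp (hgap j hj hjm)
  · rintro ⟨r, hr, hgap⟩
    obtain ⟨x, hx, hxr⟩ := exists_pos_natCast_eq k r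
    refine ⟨x, hx, coprime_primorial_iff.mpr fun i hi => ?_,
      coprime_primorial_iff.mpr fun i hi => ?_, fun j hj hjm => ?_⟩
    · exact hxr i hi ▸ (hr i hi).1
    · exact_mod_cast hxr i hi ▸ (hr i hi).2
    · obtain ⟨i, hi, hij⟩ := hgap j hj hjm
      exact one_lt_gcd_primorial_iff.mpr ⟨i, hi, by push_cast; rw [hxr i hi]; exact hij⟩

theorem memD_succ {k m : ℕ} (hk : 1 ≤ k) (h : memD k m) : memD (k + 1) m := by
  obtain ⟨r, hr, hgap⟩ := memD_iff.mp h
  have hcard : 3 ≤ ENat.card (ZMod (q k)) := by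
    rw [ENat.card_eq_coe_fintype_card, ZMod.card]
    exact_mod_cast (by have := two_mul_add_one_le_nth_prime hk; omega : 3 ≤ q k)
  obtain ⟨c, hc0, hcm⟩ := ENat.exists_ne_ne_of_three_le hcard 0 (-m)
  refine memD_iff.mpr ⟨Function.update r k c, fun i hi => ?_, fun j hj hjm => ?_⟩
  · rcases (Nat.lt_succ_iff_lt_or_eq.mp hi) with hi | rfl
    · rw [Function.update_of_ne hi.ne]; exact hr i hi
    · rw [Function.update_self]; exact ⟨hc0, fun h => hcm (eq_neg_of_add_eq_zero_left h)⟩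
  · obtain ⟨i, hi, hij⟩ := hgap j hj hjm
    exact ⟨i, hi.trans k.lt_succ_self, by rw [Function.update_of_ne hi.ne]; exact hij⟩

lemma natCast_eq_zero_iff_two_dvd {a : ℕ} : (a : ZMod (q 0)) = 0 ↔ 2 ∣ a := by
  rw [ZMod.natCast_eq_zero_iff, Nat.nth_prime_zero_eq_two]

lemma natCast_two_mul_ne_zero {i a : ℕ} (hi : i ≠ 0) (ha : ¬ q i ∣ a) :
    ((2 * a : ℕ) : ZMod (q i)) ≠ 0 := by
  rw [Ne, ZMod.natCast_eq_zero_iff, (Nat.prime_nth_prime i).dvd_mul, not_or]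
  refine ⟨fun h2 => ?_, ha⟩
  have := Nat.le_of_dvd two_pos h2
  have := two_mul_add_one_le_nth_prime (Nat.one_le_iff_ne_zero.mpr hi)
  omega

def admissiblePositions (n Q : ℕ) : Finset ℕ :=
  {a ∈ Icc 1 (n - 1) | ¬ Q ∣ a ∧ ¬ Q ∣ n - a}

lemma min_le_card_admissiblePositions (n Q : ℕ) :
    min (n - 1) ((Q - 1) / 2) ≤ #(admissiblePositions n Q) := by
  rcases lt_or_ge (n - 1) Q with hQ | hQ
  · suffices admissiblePositions n Q = Icc 1 (n - 1) by simp [this]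
    refine filter_true_of_mem fun a ha => ?_
    rw [mem_Icc] at ha
    exact ⟨Nat.not_dvd_of_pos_of_lt (by omega) (by omega),
      Nat.not_dvd_of_pos_of_lt (by omega) (by omega)⟩
  set d := (n - 1) / Q
  have hdiv : #{a ∈ Icc 1 (n - 1) | Q ∣ a} = d := by
    have := Nat.Ioc_filter_dvd_card_eq_div (n - 1) Q
    rwa [← Icc_add_one_left_eq_Ioc] at this
  have hrefl : #{a ∈ Icc 1 (n - 1) | Q ∣ n - a} ≤ d := by
    refine hdiv ▸ card_le_card_of_injOn (fun a => n - a) (fun a ha => ?_)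
      (fun a ha b hb hab => ?_)
    · simp only [coe_filter, mem_Icc, Set.mem_ofPred_eq] at ha ⊢
      exact ⟨by omega, ha.2⟩
    · simp only [coe_filter, mem_Icc, Set.mem_ofPred_eq] at ha hb hab
      omega
  have hbad : #{a ∈ Icc 1 (n - 1) | ¬(¬ Q ∣ a ∧ ¬ Q ∣ n - a)} ≤ 2 * d := by
    simp only [not_and_or, not_not, filter_or]
    exact (card_union_le _ _).trans (by rw [two_mul]; exact add_le_add hdiv.le hrefl)
  have hsplit := card_filter_add_card_filter_not (s := Icc 1 (n - 1))
    (fun a => ¬ Q ∣ a ∧ ¬ Q ∣ n - a)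
  rw [Nat.card_Icc] at hsplit
  have hdQ : d * Q ≤ n - 1 := Nat.div_mul_le_self _ _
  rcases lt_or_ge Q 3 with hQ3 | hQ3
  · omega
  have hd : 1 ≤ d := (Nat.one_le_div_iff (by omega)).mpr hQ
  have : Q - 2 ≤ d * (Q - 2) := Nat.le_mul_of_pos_left _ hd
  have : d * Q = d * (Q - 2) + d * 2 := by rw [← Nat.mul_add, Nat.sub_add_cancel (by omega)]
  unfold admissiblePositions
  omega

lemma card_le_card_biUnion_admissiblePositions {n : ℕ} {u : Finset ℕ}
    (hu : u ⊆ Icc 1 (n - 1)) : #u ≤ #(u.biUnion fun i => admissiblePositions n (q i)) := by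
  rcases u.eq_empty_or_nonempty with rfl | hne
  · simp
  set j := u.max' hne
  have hj : j ∈ Icc 1 (n - 1) := hu (u.max'_mem hne)
  rw [mem_Icc] at hj
  have hcard : #u ≤ j := by
    simpa using card_le_card fun i hi => mem_Icc.mpr ⟨(mem_Icc.mp (hu hi)).1, u.le_max' i hi⟩
  have := two_mul_add_one_le_nth_prime hj.1
  calc #u ≤ min (n - 1) ((q j - 1) / 2) := le_min (by omega) (by omega)
    _ ≤ #(admissiblePositions n (q j)) := min_le_card_admissiblePositions n (q j)
    _ ≤ _ := card_le_card <|
      subset_biUnion_of_mem (fun i => admissiblePositions n (q i)) (u.max'_mem hne)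

lemma exists_bijOn_of_card_le_card_biUnion {α : Type*} [DecidableEq α] {s : Finset α}
    (t : α → Finset α) (hts : ∀ i ∈ s, t i ⊆ s)
    (hall : ∀ u ⊆ s, #u ≤ #(u.biUnion t)) :
    ∃ g : α → α, Set.BijOn g s s ∧ ∀ i ∈ s, g i ∈ t i := by
  have hall' (u : Finset s) : #u ≤ #(u.biUnion fun i => t i) := by
    have hsub : u.map (Function.Embedding.subtype _) ⊆ s := fun x hx => by
      obtain ⟨y, -, rfl⟩ := mem_map.mp hx
      exact y.2
    have heq : (u.map (Function.Embedding.subtype _)).biUnion t = u.biUnion fun i => t i := by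
      ext; simp
    simpa only [heq, card_map] using hall _ hsub
  obtain ⟨f, hf, hft⟩ := (all_card_le_biUnion_card_iff_exists_injective _).mp hall'
  set g : α → α := fun i => if h : i ∈ s then f ⟨i, h⟩ else i
  have hgt : ∀ i ∈ s, g i ∈ t i := fun i hi => by simpa [g, hi] using hft ⟨i, hi⟩
  have hmaps : Set.MapsTo g s s := fun i hi => hts i hi (hgt i hi)
  refine ⟨g, (s.finite_toSet.injOn_iff_bijOn_of_mapsTo hmaps).mp fun i hi j hj hij => ?_, hgt⟩
  simp only [g, mem_coe.mp hi, mem_coe.mp hj, dite_true] at hij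
  exact congrArg Subtype.val (hf hij)

theorem memD_two_mul (n : ℕ) : memD n (2 * n) := by
  obtain ⟨g, hg, hadm⟩ := exists_bijOn_of_card_le_card_biUnion
    (fun i => admissiblePositions n (q i)) (fun _ _ => filter_subset _ _)
    (fun _ hu => card_le_card_biUnion_admissiblePositions hu)
  refine memD_iff.mpr ⟨fun i => if i = 0 then 1 else -((2 * g i : ℕ) : ZMod (q i)),
    fun i hi => ?_, fun j hj hjm => ?_⟩
  · rcases eq_or_ne i 0 with rfl | hi0
    · simp only [if_true]
      exact ⟨one_ne_zero, by exact_mod_cast natCast_eq_zero_iff_two_dvd.not.mpr (by omega)⟩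
    have hgi := hadm i (mem_Icc.mpr ⟨by omega, by omega⟩)
    simp only [admissiblePositions, mem_filter, mem_Icc] at hgi
    have hsum : -((2 * g i : ℕ) : ZMod (q i)) + ((2 * n : ℕ) : ZMod (q i)) =
        ((2 * (n - g i) : ℕ) : ZMod (q i)) := by
      push_cast [Nat.cast_sub (show g i ≤ n by omega)]; ring
    simp only [if_neg hi0]
    exact ⟨neg_ne_zero.mpr (natCast_two_mul_ne_zero hi0 hgi.2.1),
      by exact_mod_cast hsum ▸ natCast_two_mul_ne_zero hi0 hgi.2.2⟩
  · rcases Nat.even_or_odd j with ⟨a, rfl⟩ | hodd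
    · obtain ⟨i, hi, hgi⟩ := hg.surjOn (mem_coe.mpr (mem_Icc.mpr ⟨by omega, by omega⟩) :
        a ∈ (Icc 1 (n - 1) : Set ℕ))
      have hi := mem_Icc.mp (mem_coe.mp hi)
      refine ⟨i, by omega, ?_⟩
      simp only [if_neg (show i ≠ 0 by omega), hgi]
      push_cast; ring
    · refine ⟨0, by omega, ?_⟩
      simp only [if_true]
      exact_mod_cast natCast_eq_zero_iff_two_dvd.mpr (by obtain ⟨c, rfl⟩ := hodd; omega)

theorem every_even_eventually_mem_D (m : ℕ) (hm : 1 ≤ m) (heven : Even m) :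
    memD (m / 2) m ∧ ∀ k : ℕ, m / 2 ≤ k → memD k m := by
  obtain ⟨n, rfl⟩ := heven
  rw [show (n + n) / 2 = n by omega, ← two_mul]
  refine ⟨memD_two_mul n, fun k hk => ?_⟩
  induction k, hk using Nat.le_induction with
  | base => exact memD_two_mul n
  | succ k hk ih => exact memD_succ (by omega) ih

end PrimorialDifferences
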